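/- Let T be a finite abelian group, K a field of characteristic zero, and S ⊆ T with 2^{2k-1}·|T \ S| < |T|. Suppose f : S → K is a function admitting an expression f(s) = c₁θ₁(s)+⋯+c_mθ_m(s) for all s ∈ S with m ≤ k, the θᵢ pairwise distinct characters of T, and cᵢ ∈ K nonzero. Then this expression is unique: any other such expression with at most k distinct characters and nonzero coefficients uses the same set of pairs (θᵢ, cᵢ). -/

import Mathlib

/-!
The difference of two such expansions is a combination of at most `2k` distinct characters
vanishing on `S`, so it suffices to show that such a combination is trivial. This is Artin's
elimination argument, run on a shrinking set: if `χ₁ ≠ χ₂` differ at `t`, then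
`s ↦ ∑ d χ (χ s t - χ₂ t χ s)` vanishes on `{s ∈ S | s t ∈ S}`, whose complement is at most
twice that of `S`, and it no longer involves `χ₂` while keeping `χ₁` with coefficient
`d χ₁ (χ₁ t - χ₂ t)`. After `n` steps the complement has grown by a factor of at most `2ⁿ`,
which the hypothesis on `|T \ S|` absorbs.
-/

open Finset

section CharacterSums

variable {G K : Type*} [Group G] [DecidableEq G] [CommRing K]

theorem card_compl_filter_mul_mem_le [Fintype G] (S : Finset G) (t : G) :
    #(S.filter (· * t ∈ S))ᶜ ≤ 2 * #Sᶜ := by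
  have hsub : (S.filter (· * t ∈ S))ᶜ ⊆ Sᶜ ∪ Sᶜ.image (· * t⁻¹) := by
    intro x hx
    by_cases hxS : x ∈ S
    · have hxt : x * t ∉ S := by simpa [hxS] using hx
      exact mem_union_right _ (mem_image.2 ⟨x * t, by simpa using hxt, by group⟩)
    · exact mem_union_left _ (mem_compl.2 hxS)
  calc #(S.filter (· * t ∈ S))ᶜ ≤ #(Sᶜ ∪ Sᶜ.image (· * t⁻¹)) := card_le_card hsub
    _ ≤ #Sᶜ + #(Sᶜ.image (· * t⁻¹)) := card_union_le _ _
    _ ≤ 2 * #Sᶜ := by linarith [card_image_le (s := Sᶜ) (f := (· * t⁻¹))]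

theorem sum_mul_sub_mul_eq_zero_of_sum_mul_eq_zero {A : Finset (G →* Kˣ)} {S : Finset G}
    {d : (G →* Kˣ) → K} (hd : ∀ s ∈ S, ∑ χ ∈ A, d χ * χ s = 0) (ψ : G →* Kˣ) (t : G) :
    ∀ s ∈ S.filter (· * t ∈ S), ∑ χ ∈ A, d χ * (χ t - ψ t) * χ s = 0 := by
  intro s hs
  obtain ⟨hs, hst⟩ := mem_filter.1 hs
  calc ∑ χ ∈ A, d χ * (χ t - ψ t) * χ s
      = ∑ χ ∈ A, d χ * χ (s * t) - ψ t * ∑ χ ∈ A, d χ * χ s := by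
        rw [mul_sum, ← sum_sub_distrib]
        refine sum_congr rfl fun χ _ => ?_
        rw [map_mul, Units.val_mul]
        ring
    _ = 0 := by rw [hd _ hst, hd _ hs, mul_zero, sub_zero]

variable [IsDomain K]

theorem eq_zero_of_sum_mul_eq_zero_on [Fintype G] (A : Finset (G →* Kˣ)) (S : Finset G)
    (hS : 2 ^ #A * #Sᶜ < 2 * Fintype.card G) (d : (G →* Kˣ) → K)
    (hd : ∀ s ∈ S, ∑ χ ∈ A, d χ * χ s = 0) : ∀ χ ∈ A, d χ = 0 := by
  classical
  induction A using Finset.strongInduction generalizing S d with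
  | H A ih =>
  intro χ₁ hχ₁
  by_cases hsingle : ∀ χ ∈ A, χ = χ₁
  · obtain rfl : A = {χ₁} := eq_singleton_iff_unique_mem.2 ⟨hχ₁, hsingle⟩
    obtain ⟨s, hs⟩ : S.Nonempty := by
      rw [← card_pos]
      have := card_compl S
      simp only [card_singleton, pow_one] at hS
      omega
    simpa using hd s hs
  push Not at hsingle
  obtain ⟨χ₂, hχ₂, hne⟩ := hsingle
  obtain ⟨t, ht⟩ : ∃ t, χ₁ t ≠ χ₂ t := DFunLike.ne_iff.1 hne.symm
  have hbound : 2 ^ #(A.erase χ₂) * #(S.filter (· * t ∈ S))ᶜ < 2 * Fintype.card G := by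
    calc 2 ^ #(A.erase χ₂) * #(S.filter (· * t ∈ S))ᶜ
        ≤ 2 ^ #(A.erase χ₂) * (2 * #Sᶜ) := by gcongr; exact card_compl_filter_mul_mem_le S t
      _ = 2 ^ #A * #Sᶜ := by rw [← card_erase_add_one hχ₂, pow_succ]; ring
      _ < 2 * Fintype.card G := hS
  have hsum : ∀ s ∈ S.filter (· * t ∈ S),
      ∑ χ ∈ A.erase χ₂, d χ * (χ t - χ₂ t) * χ s = 0 := by
    intro s hs
    rw [sum_erase _ (by simp)]
    exact sum_mul_sub_mul_eq_zero_of_sum_mul_eq_zero hd χ₂ t s hs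
  have h := ih (A.erase χ₂) (erase_ssubset hχ₂) _ hbound _ hsum χ₁ (mem_erase.2 ⟨hne.symm, hχ₁⟩)
  exact (mul_eq_zero.1 h).resolve_right (sub_ne_zero.2 (Units.val_injective.ne ht))

end CharacterSums

section ExtendByZero

variable {ι α R : Type*} {θ : ι → α} {c : ι → R}

theorem sum_extend_mul_eq [Fintype ι] [DecidableEq α] [NonUnitalNonAssocSemiring R]
    (hθ : Function.Injective θ) {A : Finset α} (hA : univ.image θ ⊆ A) (w : α → R) :
    ∑ a ∈ A, Function.extend θ c 0 a * w a = ∑ i, c i * w (θ i) := by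
  rw [← sum_subset hA, sum_image hθ.injOn]
  · simp only [hθ.extend_apply]
  · intro a _ ha
    rw [Function.extend_apply' _ _ _ (by simpa using ha), Pi.zero_apply, zero_mul]

theorem range_prod_eq_of_extend [Zero R] (hθ : Function.Injective θ) (hc : ∀ i, c i ≠ 0) :
    (Set.range fun i => (θ i, c i)) = {p | p.2 ≠ 0 ∧ Function.extend θ c 0 p.1 = p.2} := by
  ext ⟨a, r⟩
  simp only [Set.mem_range, Set.mem_ofPred_eq, Prod.mk.injEq]
  constructor
  · rintro ⟨i, rfl, rfl⟩
    exact ⟨hc i, hθ.extend_apply _ _ _⟩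
  · rintro ⟨hr, hext⟩
    by_cases ha : ∃ i, θ i = a
    · obtain ⟨i, rfl⟩ := ha
      exact ⟨i, rfl, by rw [← hext, hθ.extend_apply]⟩
    · rw [Function.extend_apply' _ _ _ ha] at hext
      exact absurd hext.symm hr

end ExtendByZero

theorem character_expansion_on_subset_unique_general
    {T K : Type*} [CommGroup T] [Fintype T] [DecidableEq T]
    [Field K]
    (k : ℕ) (S : Finset T)
    (hS : 2 ^ (2 * k - 1) * (Sᶜ).card < Fintype.card T)
    (f : T → K)
    (m m' : ℕ) (hm : m ≤ k) (hm' : m' ≤ k)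
    (θ : Fin m → (T →* Kˣ)) (hθ : Function.Injective θ)
    (θ' : Fin m' → (T →* Kˣ)) (hθ' : Function.Injective θ')
    (c : Fin m → K) (c' : Fin m' → K)
    (hc : ∀ i, c i ≠ 0) (hc' : ∀ j, c' j ≠ 0)
    (hf : ∀ s ∈ S, f s = ∑ i, c i * ((θ i s : Kˣ) : K))
    (hf' : ∀ s ∈ S, f s = ∑ j, c' j * ((θ' j s : Kˣ) : K)) :
    (Set.range fun i => (θ i, c i)) = Set.range fun j => (θ' j, c' j) := by
  classical
  set A := univ.image θ ∪ univ.image θ'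
  have hA : #A ≤ 2 * k :=
    calc #A ≤ #(univ.image θ) + #(univ.image θ') := card_union_le _ _
      _ ≤ m + m' := by
        gcongr <;> exact card_image_le.trans (by simp)
      _ ≤ 2 * k := by omega
  have hbound : 2 ^ #A * #Sᶜ < 2 * Fintype.card T := by
    calc 2 ^ #A * #Sᶜ ≤ 2 * 2 ^ (2 * k - 1) * #Sᶜ := by
          gcongr
          rw [← pow_succ']
          exact Nat.pow_le_pow_right two_pos (by omega)
      _ < 2 * Fintype.card T := by rw [mul_assoc]; omega
  have hdiff : ∀ s ∈ S,
      ∑ χ ∈ A, (Function.extend θ c 0 χ - Function.extend θ' c' 0 χ) * χ s = 0 := by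
    intro s hs
    simp only [sub_mul, sum_sub_distrib]
    rw [sum_extend_mul_eq hθ subset_union_left, sum_extend_mul_eq hθ' subset_union_right,
      ← hf s hs, ← hf' s hs, sub_self]
  have hext : Function.extend θ c 0 = Function.extend θ' c' 0 := by
    funext χ
    by_cases hχ : χ ∈ A
    · exact sub_eq_zero.1 (eq_zero_of_sum_mul_eq_zero_on A S hbound _ hdiff χ hχ)
    · have hθχ : ¬∃ i, θ i = χ := fun ⟨i, hi⟩ => hχ (by simp [A, ← hi])
      have hθ'χ : ¬∃ j, θ' j = χ := fun ⟨j, hj⟩ => hχ (by simp [A, ← hj])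
      rw [Function.extend_apply' _ _ _ hθχ, Function.extend_apply' _ _ _ hθ'χ]
  rw [range_prod_eq_of_extend hθ hc, range_prod_eq_of_extend hθ' hc', hext]

/-- Uniqueness of an expression of a function on `S` as a linear combination of
at most `k` distinct characters with nonzero coefficients, when
`2^(2k-1) * |T \ S| < |T|`. -/
theorem character_expansion_on_subset_unique
    {T K : Type*} [CommGroup T] [Fintype T] [DecidableEq T]
    [Field K] [CharZero K]
    (k : ℕ) (S : Finset T)
    (hS : 2 ^ (2 * k - 1) * (Sᶜ).card < Fintype.card T)
    (f : T → K)
    (m m' : ℕ) (hm : m ≤ k) (hm' : m' ≤ k)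
    (θ : Fin m → (T →* Kˣ)) (hθ : Function.Injective θ)
    (θ' : Fin m' → (T →* Kˣ)) (hθ' : Function.Injective θ')
    (c : Fin m → K) (c' : Fin m' → K)
    (hc : ∀ i, c i ≠ 0) (hc' : ∀ j, c' j ≠ 0)
    (hf : ∀ s ∈ S, f s = ∑ i, c i * ((θ i s : Kˣ) : K))
    (hf' : ∀ s ∈ S, f s = ∑ j, c' j * ((θ' j s : Kˣ) : K)) :
    (Set.range fun i => (θ i, c i)) = Set.range fun j => (θ' j, c' j) :=
  character_expansion_on_subset_unique_general k S hS f m m' hm hm' θ hθ θ' hθ' c c' hc hc' hf hf'
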